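/- arXiv:2401.14660 — 3 statements merged into one kernel-verified Lean document; each statement's English description precedes it below -/
import Mathlib

section
/- Let a ∈ (0,3/10], let f ∈ F⁺ be a minimizer of H⁺ on F⁺ (i.e., H⁺(f) ≤ H⁺(φ) for all φ ∈ F⁺), and let p > 0. Then: (i) if for every ε > 0 the derivative f' is neither a.e. equal to a nor a.e. equal to −a on (p, p+ε), then g_a((1+f(p))/p) = g_a((1−f(p))/p); (ii) the same equality holds if for every ε > 0, f' is neither a.e. equal to a nor a.e. equal to −a on (p−ε, p); (iii) if for some ε > 0, f' = −a a.e. on (p−ε,p) and f' = a a.e. on (p,p+ε), then g_a((1+f(p))/p) ≥ g_a((1−f(p))/p); (iv) if for some ε > 0, f' = a a.e. on (p−ε,p) and f' = −a a.e. on (p,p+ε), then g_a((1+f(p))/p) ≤ g_a((1−f(p))/p). -/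
open MeasureTheory Filter Set
open scoped ENNReal

/-- The kernel `h_a(y,r) := (y² − r² − (a⁻¹ − a)·y·r)/(y² + r²)²`. -/
noncomputable def hker (a y r : ℝ) : ℝ :=
  (y ^ 2 - r ^ 2 - (a⁻¹ - a) * y * r) / (y ^ 2 + r ^ 2) ^ 2

/-- `g_a(s) := (2s³ + 3A·s² − 6s − A)/(1 + s²)³` with `A := a⁻¹ − a`. -/
noncomputable def gfun (a s : ℝ) : ℝ :=
  (2 * s ^ 3 + 3 * (a⁻¹ - a) * s ^ 2 - 6 * s - (a⁻¹ - a)) / (1 + s ^ 2) ^ 3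

/-- Membership in `F⁺`: `f : [0,∞) → [0,∞)` is Lipschitz with constant `a`, `f(0) = 1`,
and has right derivative `−a` at `0`. -/
def memFplus (a : ℝ) (f : ℝ → ℝ) : Prop :=
  (∀ x : ℝ, 0 ≤ x → 0 ≤ f x) ∧
  (∀ x y : ℝ, 0 ≤ x → 0 ≤ y → |f x - f y| ≤ a * |x - y|) ∧
  f 0 = 1 ∧
  HasDerivWithinAt f (-a) (Ici (0:ℝ)) 0

/-- `H⁺(f) := ∫₀^∞ [ h_a(y, 1+f(y)) + h_a(y, 1−f(y)) ] dy`, valued in `ℝ ∪ {+∞}`. -/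
noncomputable def Hplus (a : ℝ) (f : ℝ → ℝ) : EReal :=
  ((∫ y in Ioi (0:ℝ), hker a y (1 + f y) : ℝ) : EReal) +
    ((∫⁻ y in Ioi (0:ℝ), ENNReal.ofReal (hker a y (1 - f y)) : ℝ≥0∞) : EReal)

/-- `f' = c` almost everywhere on the set `s`. -/
def derivAEeq (f : ℝ → ℝ) (s : Set ℝ) (c : ℝ) : Prop :=
  ∀ᵐ y ∂(volume.restrict s), deriv f y = c

/-!
First variation. Near `p`, replace `f` on a short interval `[u, v]` by its upper envelope
`min (f u + a (x - u)) (f v + a (v - x))`, or by the symmetric lower envelope; both stay in `F⁺` (the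
lower one while `f` stays positive), differ from `f` by `O(v - u)`, and coincide with `f` only if
`f` has slopes `a, -a` (resp. `-a, a`) on `[u, v]`. Since `∂ᵣh_a` is continuous and
`p³ ∂ᵣh_a(p, r) = g_a(r / p)`, changing `f` by `w` on `[u, v]` changes `H⁺` by
`(∫ w) (∂ᵣh_a(p, 1 + f p) - ∂ᵣh_a(p, 1 - f p)) + o(∫ |w|)`. Minimality then gives
`g_a((1 - f p)/p) ≤ g_a((1 + f p)/p)` whenever arbitrarily short intervals near `p` carry no
`(a, -a)` kink, and the reverse inequality when they carry no `(-a, a)` kink; the hypotheses of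
(i)–(iv) provide such intervals. `H⁺(f)` is finite because `f` does at least as well as a tent.
-/

noncomputable def hkerDeriv (a y r : ℝ) : ℝ :=
  (2 * r ^ 3 + 3 * (a⁻¹ - a) * y * r ^ 2 - 6 * r * y ^ 2 - (a⁻¹ - a) * y ^ 3) /
    (y ^ 2 + r ^ 2) ^ 3

section Kernel

variable {a y p r : ℝ}

lemma hasDerivAt_hker (hy : y ≠ 0) : HasDerivAt (hker a y) (hkerDeriv a y r) r := by
  have hQ : y ^ 2 + r ^ 2 ≠ 0 := by positivity
  have hnum : HasDerivAt (fun r => y ^ 2 - r ^ 2 - (a⁻¹ - a) * y * r)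
      (-(2 * r) - (a⁻¹ - a) * y) r := by
    simpa using ((hasDerivAt_pow 2 r).const_sub (y ^ 2)).fun_sub
      ((hasDerivAt_id r).const_mul ((a⁻¹ - a) * y))
  have hden : HasDerivAt (fun r => (y ^ 2 + r ^ 2) ^ 2) (2 * (y ^ 2 + r ^ 2) * (2 * r)) r := by
    simpa using ((hasDerivAt_pow 2 r).const_add (y ^ 2)).fun_pow 2
  refine (hnum.div hden (by positivity)).congr_deriv ?_
  rw [hkerDeriv]
  field_simp
  ring

lemma gfun_div_eq (hp : p ≠ 0) : gfun a (r / p) = p ^ 3 * hkerDeriv a p r := by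
  have : 1 + (r / p) ^ 2 ≠ 0 := by positivity
  have : p ^ 2 + r ^ 2 ≠ 0 := by positivity
  rw [gfun, hkerDeriv]
  field_simp

lemma continuousAt_hkerDeriv (hp : p ≠ 0) :
    ContinuousAt (fun q : ℝ × ℝ => hkerDeriv a q.1 q.2) (p, r) := by
  have : (p ^ 2 + r ^ 2) ^ 3 ≠ 0 := by positivity
  unfold hkerDeriv
  fun_prop (disch := assumption)

lemma hker_linearization (hp : 0 < p) (r₀ : ℝ) {ε : ℝ} (hε : 0 < ε) :
    ∃ δ > 0, ∀ y r r', |y - p| < δ → |r - r₀| < δ → |r' - r₀| < δ →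
      |hker a y r' - hker a y r - hkerDeriv a p r₀ * (r' - r)| ≤ ε * |r' - r| := by
  obtain ⟨δ₁, hδ₁, hcont⟩ :=
    Metric.continuousAt_iff.1 (continuousAt_hkerDeriv (a := a) (r := r₀) hp.ne') ε hε
  refine ⟨min δ₁ p, by positivity, fun y r r' hy hr hr' => ?_⟩
  have hy0 : y ≠ 0 := by
    have := abs_lt.1 (hy.trans_le (min_le_right _ _)); linarith
  set c := hkerDeriv a p r₀
  set B := Metric.ball r₀ (min δ₁ p)
  have hderiv : ∀ s ∈ B,
      HasDerivWithinAt (fun s => hker a y s - c * s) (hkerDeriv a y s - c) B s := fun s _ =>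
    ((hasDerivAt_hker hy0).sub ((hasDerivAt_id s).const_mul c |>.congr_deriv (mul_one c)))
      |>.hasDerivWithinAt
  have hbound : ∀ s ∈ B, ‖hkerDeriv a y s - c‖ ≤ ε := by
    intro s hs
    rw [← dist_eq_norm]
    refine (hcont (x := (y, s)) ?_).le
    rw [Prod.dist_eq, Real.dist_eq]
    exact max_lt (hy.trans_le (min_le_left _ _))
      ((Metric.mem_ball.1 hs).trans_le (min_le_left _ _))
  have hmvt := (convex_ball r₀ (min δ₁ p)).norm_image_sub_le_of_norm_hasDerivWithin_le
    (x := r) (y := r') hderiv hbound (by rwa [Metric.mem_ball, Real.dist_eq])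
    (by rwa [Metric.mem_ball, Real.dist_eq])
  rw [Real.norm_eq_abs, Real.norm_eq_abs] at hmvt
  calc _ = |hker a y r' - c * r' - (hker a y r - c * r)| := by ring_nf
    _ ≤ _ := hmvt

lemma hker_nonneg (ha : 0 < a) (ha1 : a ≤ 1) (hy : 0 < y) (hr : |r| ≤ a * y) :
    0 ≤ hker a y r := by
  have hfactor : y ^ 2 - r ^ 2 - (a⁻¹ - a) * y * r = (a * y - r) * (y / a + r) := by
    field_simp
    ring
  have hay : a * y ≤ y / a := by
    have : a * a ≤ 1 := by nlinarith
    rw [le_div_iff₀ ha]; nlinarith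
  obtain ⟨hr₁, hr₂⟩ := abs_le.1 hr
  rw [hker, hfactor]
  exact div_nonneg (mul_nonneg (by linarith) (by linarith)) (by positivity)

lemma hker_mul_self (ha : a ≠ 0) : hker a y (a * y) = 0 := by
  rw [hker, div_eq_zero_iff]
  left
  field_simp
  ring

lemma hker_one_le (ha : 0 < a) (ha1 : a ≤ 1) (hy : 0 ≤ y) : hker a y 1 ≤ (1 + y ^ 2)⁻¹ := by
  have hA : 0 ≤ a⁻¹ - a := sub_nonneg.2 (ha1.trans (one_le_inv₀ ha |>.2 ha1))
  have hden : (1 + y ^ 2)⁻¹ * (y ^ 2 + 1 ^ 2) ^ 2 = 1 + y ^ 2 := by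
    field_simp
    ring
  rw [hker, div_le_iff₀ (by positivity), hden]
  nlinarith [mul_nonneg hA hy]

lemma abs_hker_le (ha : 0 < a) (ha1 : a ≤ 1) (hr : 1 ≤ r) :
    |hker a y r| ≤ (1 + (a⁻¹ - a) / 2) * (1 + y ^ 2)⁻¹ := by
  have hA : 0 ≤ a⁻¹ - a := sub_nonneg.2 (ha1.trans (one_le_inv₀ ha |>.2 ha1))
  have hQ : 0 < y ^ 2 + r ^ 2 := by positivity
  have hnum : |y ^ 2 - r ^ 2 - (a⁻¹ - a) * y * r| ≤ (1 + (a⁻¹ - a) / 2) * (y ^ 2 + r ^ 2) := by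
    have h₁ : |y * r| ≤ (y ^ 2 + r ^ 2) / 2 := by
      rw [abs_le]; constructor <;> nlinarith [sq_nonneg (y - r), sq_nonneg (y + r)]
    have h₂ := abs_le.1 h₁
    rw [abs_le]
    constructor <;> nlinarith [mul_le_mul_of_nonneg_left h₂.1 hA, mul_le_mul_of_nonneg_left h₂.2 hA]
  have hden : (1 + y ^ 2) * (y ^ 2 + r ^ 2) ≤ (y ^ 2 + r ^ 2) ^ 2 := by
    rw [sq (y ^ 2 + r ^ 2)]
    exact mul_le_mul_of_nonneg_right (by nlinarith) hQ.le
  calc |hker a y r| = |y ^ 2 - r ^ 2 - (a⁻¹ - a) * y * r| / (y ^ 2 + r ^ 2) ^ 2 := by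
        rw [hker, abs_div, abs_of_pos (by positivity : (0 : ℝ) < (y ^ 2 + r ^ 2) ^ 2)]
    _ ≤ (1 + (a⁻¹ - a) / 2) * (y ^ 2 + r ^ 2) / ((1 + y ^ 2) * (y ^ 2 + r ^ 2)) :=
        div_le_div₀ (by positivity) hnum (by positivity) hden
    _ = (1 + (a⁻¹ - a) / 2) * (1 + y ^ 2)⁻¹ := by field_simp

end Kernel

lemma continuousOn_of_abs_sub_le {a : ℝ} {f : ℝ → ℝ} {s : Set ℝ}
    (hf : ∀ x ∈ s, ∀ y ∈ s, |f x - f y| ≤ a * |x - y|) : ContinuousOn f s :=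
  (LipschitzOnWith.of_dist_le' fun x hx y hy => by
    simpa only [Real.dist_eq] using hf x hx y hy).continuousOn

lemma abs_neg_sub_neg_le {a : ℝ} {f : ℝ → ℝ} {s : Set ℝ}
    (hf : ∀ x ∈ s, ∀ y ∈ s, |f x - f y| ≤ a * |x - y|) :
    ∀ x ∈ s, ∀ y ∈ s, |(-f) x - (-f) y| ≤ a * |x - y| := fun x hx y hy => by
  rw [Pi.neg_apply, Pi.neg_apply, neg_sub_neg, abs_sub_comm]
  exact hf x hx y hy

namespace memFplus

variable {a : ℝ} {f : ℝ → ℝ}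

lemma nonneg (hf : memFplus a f) {x : ℝ} (hx : 0 ≤ x) : 0 ≤ f x := hf.1 x hx

lemma abs_sub_le (hf : memFplus a f) :
    ∀ x ∈ Ici (0 : ℝ), ∀ y ∈ Ici (0 : ℝ), |f x - f y| ≤ a * |x - y| :=
  fun x hx y hy => hf.2.1 x y hx hy

lemma continuousOn (hf : memFplus a f) : ContinuousOn f (Ici 0) :=
  continuousOn_of_abs_sub_le hf.abs_sub_le

lemma abs_one_sub_le (hf : memFplus a f) {y : ℝ} (hy : 0 ≤ y) : |1 - f y| ≤ a * y := by
  simpa [hf.2.2.1, abs_of_nonneg hy, abs_sub_comm] using hf.2.1 y 0 hy le_rfl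

lemma of_eqOn_Ico (hf : memFplus a f) {φ : ℝ → ℝ} {u : ℝ} (hu : 0 < u)
    (heq : EqOn φ f (Ico 0 u)) (hnonneg : ∀ x, 0 ≤ x → 0 ≤ φ x)
    (hφ : ∀ x ∈ Ici (0 : ℝ), ∀ y ∈ Ici (0 : ℝ), |φ x - φ y| ≤ a * |x - y|) :
    memFplus a φ :=
  ⟨hnonneg, fun x y hx hy => hφ x hx y hy, (heq ⟨le_rfl, hu⟩).trans hf.2.2.1,
    hf.2.2.2.congr_of_eventuallyEq (eventually_of_mem (Ico_mem_nhdsGE hu) heq)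
      (heq ⟨le_rfl, hu⟩)⟩

end memFplus

section DerivAE

variable {f : ℝ → ℝ} {s t b c d : ℝ}

lemma derivAEeq.mono {S T : Set ℝ} (h : derivAEeq f S c) (hTS : T ⊆ S) : derivAEeq f T c :=
  ae_restrict_of_ae_restrict_of_subset hTS h

lemma derivAEeq.eq_of_Ioo (h₁ : derivAEeq f (Ioo s t) c) (h₂ : derivAEeq f (Ioo s t) d)
    (hst : s < t) : c = d := by
  have : (ae (volume.restrict (Ioo s t))).NeBot := ae_restrict_neBot.2 (by simp [hst])
  obtain ⟨y, h₁y, h₂y⟩ := (h₁.and h₂).exists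
  exact h₁y.symm.trans h₂y

lemma derivAEeq_neg_iff {S : Set ℝ} : derivAEeq (-f) S c ↔ derivAEeq f S (-c) := by
  simp only [derivAEeq, deriv.neg, neg_eq_iff_eq_neg]

lemma derivAEeq_of_eqOn_affine (h : EqOn f (fun y => b + c * y) (Ioo s t)) :
    derivAEeq f (Ioo s t) c :=
  ae_restrict_of_forall_mem measurableSet_Ioo fun x hx => by
    rw [(h.eventuallyEq_of_mem (isOpen_Ioo.mem_nhds hx)).deriv_eq]
    simp

end DerivAE

def IsKinkOn (f : ℝ → ℝ) (c u v : ℝ) : Prop :=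
  ∃ m ∈ Icc u v, derivAEeq f (Ioo u m) c ∧ derivAEeq f (Ioo m v) (-c)

lemma isKinkOn_neg_iff {f : ℝ → ℝ} {c u v : ℝ} : IsKinkOn (-f) c u v ↔ IsKinkOn f (-c) u v := by
  simp only [IsKinkOn, derivAEeq_neg_iff, neg_neg]

def AdmitsNonKinkNear (f : ℝ → ℝ) (c p : ℝ) : Prop :=
  ∀ δ > 0, ∃ u v, p - δ < u ∧ u < v ∧ v < p + δ ∧ ¬IsKinkOn f c u v

section NonKink

variable {f : ℝ → ℝ} {c p : ℝ}

lemma admitsNonKinkNear_of_right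
    (h : ∀ ε, 0 < ε → ¬derivAEeq f (Ioo p (p + ε)) c ∧ ¬derivAEeq f (Ioo p (p + ε)) (-c)) :
    AdmitsNonKinkNear f c p := by
  refine fun δ hδ => ⟨p, p + δ / 2, by linarith, by linarith, by linarith, ?_⟩
  rintro ⟨m, hm, hleft, hright⟩
  rcases hm.1.eq_or_lt with rfl | hpm
  · exact (h (δ / 2) (by positivity)).2 hright
  · exact (h (m - p) (sub_pos.2 hpm)).1 (by rwa [add_sub_cancel])

lemma admitsNonKinkNear_of_left
    (h : ∀ ε, 0 < ε → ¬derivAEeq f (Ioo (p - ε) p) c ∧ ¬derivAEeq f (Ioo (p - ε) p) (-c)) :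
    AdmitsNonKinkNear f c p := by
  refine fun δ hδ => ⟨p - δ / 2, p, by linarith, by linarith, by linarith, ?_⟩
  rintro ⟨m, hm, hleft, hright⟩
  rcases hm.2.eq_or_lt with rfl | hmp
  · exact (h (δ / 2) (by positivity)).1 hleft
  · exact (h (p - m) (sub_pos.2 hmp)).2 (by rwa [sub_sub_cancel])

lemma admitsNonKinkNear_of_corner (hc : c ≠ 0) {ε : ℝ} (hε : 0 < ε)
    (hleft : derivAEeq f (Ioo (p - ε) p) (-c)) (hright : derivAEeq f (Ioo p (p + ε)) c) :
    AdmitsNonKinkNear f c p := by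
  intro δ hδ
  obtain ⟨t, ht, htδ, htε⟩ : ∃ t, 0 < t ∧ t < δ ∧ t ≤ ε :=
    ⟨min δ ε / 2, by positivity, by linarith [min_le_left δ ε], by linarith [min_le_right δ ε]⟩
  refine ⟨p - t, p + t, by linarith, by linarith, by linarith, ?_⟩
  rintro ⟨m, hm, hl, hr⟩
  rcases le_or_gt p m with hpm | hmp
  · have := (hl.mono (Ioo_subset_Ioo_right hpm)).eq_of_Ioo
      (hleft.mono (Ioo_subset_Ioo_left (by linarith))) (by linarith)
    exact hc (by linarith)
  · have := (hr.mono (Ioo_subset_Ioo_left hmp.le)).eq_of_Ioo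
      (hright.mono (Ioo_subset_Ioo_right (by linarith))) (by linarith)
    exact hc (by linarith)

end NonKink

/-- On `[u, v]`, the largest `a`-Lipschitz function taking the values of `f` at `u` and `v`;
off `[u, v]` the `max` reduces to `f` as soon as `f` is `a`-Lipschitz. -/
noncomputable def upperEnvelope (a : ℝ) (f : ℝ → ℝ) (u v x : ℝ) : ℝ :=
  max (f x) (min (f u + a * (x - u)) (f v + a * (v - x)))

noncomputable def lowerEnvelope (a : ℝ) (f : ℝ → ℝ) (u v : ℝ) : ℝ → ℝ :=
  -upperEnvelope a (-f) u v

section Envelope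

variable {a : ℝ} {f : ℝ → ℝ} {s : Set ℝ} {u v x : ℝ}

lemma le_upperEnvelope : f x ≤ upperEnvelope a f u v x := le_max_left _ _

lemma upperEnvelope_sub_le (ha : 0 ≤ a) (hf : ∀ x ∈ s, ∀ y ∈ s, |f x - f y| ≤ a * |x - y|)
    (hs : Icc u v ⊆ s) (hx : x ∈ Icc u v) : upperEnvelope a f u v x - f x ≤ 2 * a * (v - u) := by
  have hfu := (abs_le.1 (hf u (hs ⟨le_rfl, hx.1.trans hx.2⟩) x (hs hx))).2
  rw [abs_of_nonpos (sub_nonpos.2 hx.1)] at hfu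
  have : a * (x - u) ≤ a * (v - u) := mul_le_mul_of_nonneg_left (by linarith [hx.2]) ha
  refine sub_le_iff_le_add'.2 (max_le ?_ ((min_le_left _ _).trans (by linarith)))
  nlinarith [hx.1, hx.2]

lemma eqOn_upperEnvelope (hf : ∀ x ∈ s, ∀ y ∈ s, |f x - f y| ≤ a * |x - y|) (hu : u ∈ s)
    (hv : v ∈ s) : EqOn (upperEnvelope a f u v) f (s \ Ioo u v) := by
  rintro x ⟨hx, hxuv⟩
  refine max_eq_left ?_
  rcases le_or_gt x u with hxu | hux
  · have := (abs_le.1 (hf u hu x hx)).2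
    rw [abs_of_nonneg (sub_nonneg.2 hxu)] at this
    exact (min_le_left _ _).trans (by linarith)
  · have hvx : v ≤ x := not_lt.1 fun hxv => hxuv ⟨hux, hxv⟩
    have := (abs_le.1 (hf v hv x hx)).2
    rw [abs_of_nonpos (sub_nonpos.2 hvx)] at this
    exact (min_le_right _ _).trans (by linarith)

lemma eqOn_lowerEnvelope (hf : ∀ x ∈ s, ∀ y ∈ s, |f x - f y| ≤ a * |x - y|) (hu : u ∈ s)
    (hv : v ∈ s) : EqOn (lowerEnvelope a f u v) f (s \ Ioo u v) := fun x hx => by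
  rw [lowerEnvelope, Pi.neg_apply, eqOn_upperEnvelope (abs_neg_sub_neg_le hf) hu hv hx,
    Pi.neg_apply, neg_neg]

lemma lowerEnvelope_sub_eq :
    lowerEnvelope a f u v x - f x = -(upperEnvelope a (-f) u v x - (-f) x) := by
  simp only [lowerEnvelope, Pi.neg_apply]
  ring

lemma abs_upperEnvelope_sub_le (ha : 0 ≤ a)
    (hf : ∀ x ∈ s, ∀ y ∈ s, |f x - f y| ≤ a * |x - y|) :
    ∀ x ∈ s, ∀ y ∈ s, |upperEnvelope a f u v x - upperEnvelope a f u v y| ≤ a * |x - y| := by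
  intro x hx y hy
  have hcone₁ : |f u + a * (x - u) - (f u + a * (y - u))| = a * |x - y| := by
    rw [show f u + a * (x - u) - (f u + a * (y - u)) = a * (x - y) by ring, abs_mul,
      abs_of_nonneg ha]
  have hcone₂ : |f v + a * (v - x) - (f v + a * (v - y))| = a * |x - y| := by
    rw [show f v + a * (v - x) - (f v + a * (v - y)) = -(a * (x - y)) by ring, abs_neg,
      abs_mul, abs_of_nonneg ha]
  refine (abs_max_sub_max_le_max _ _ _ _).trans (max_le (hf x hx y hy) ?_)
  refine (abs_min_sub_min_le_max _ _ _ _).trans ?_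
  rw [hcone₁, hcone₂, max_self]

lemma isKinkOn_of_eqOn_upperEnvelope (ha : 0 < a)
    (hf : ∀ x ∈ s, ∀ y ∈ s, |f x - f y| ≤ a * |x - y|) (hs : Icc u v ⊆ s) (huv : u ≤ v)
    (heq : EqOn (upperEnvelope a f u v) f (Icc u v)) : IsKinkOn f a u v := by
  have hu : u ∈ s := hs ⟨le_rfl, huv⟩
  have hv : v ∈ s := hs ⟨huv, le_rfl⟩
  have hmin : ∀ y ∈ Icc u v, f y = min (f u + a * (y - u)) (f v + a * (v - y)) := by
    intro y hy
    have h₁ := (abs_le.1 (hf y (hs hy) u hu)).2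
    have h₂ := (abs_le.1 (hf y (hs hy) v hv)).2
    rw [abs_of_nonneg (sub_nonneg.2 hy.1)] at h₁
    rw [abs_of_nonpos (sub_nonpos.2 hy.2)] at h₂
    exact le_antisymm (le_min (by linarith) (by linarith)) (max_eq_left_iff.1 (heq hy))
  set m := (u + v) / 2 + (f v - f u) / (2 * a)
  have hcross : ∀ y, f v + a * (v - y) - (f u + a * (y - u)) = 2 * a * (m - y) := by
    intro y; simp only [m]; field_simp; ring
  have hfuv := abs_le.1 (hf v hv u hu)
  rw [abs_of_nonneg (sub_nonneg.2 huv)] at hfuv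
  have hm : m ∈ Icc u v := by
    constructor <;> nlinarith [hcross u, hcross v]
  refine ⟨m, hm, derivAEeq_of_eqOn_affine (b := f u - a * u) fun y hy => ?_,
    derivAEeq_of_eqOn_affine (b := f v + a * v) fun y hy => ?_⟩
  · rw [hmin y ⟨hy.1.le, hy.2.le.trans hm.2⟩, min_eq_left (by nlinarith [hcross y, hy.2])]
    ring
  · rw [hmin y ⟨hm.1.trans hy.1.le, hy.2.le⟩, min_eq_right (by nlinarith [hcross y, hy.1])]
    ring

lemma integral_upperEnvelope_sub_pos (ha : 0 < a)
    (hf : ∀ x ∈ s, ∀ y ∈ s, |f x - f y| ≤ a * |x - y|) (hs : Icc u v ⊆ s) (huv : u < v)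
    (hkink : ¬IsKinkOn f a u v) : 0 < ∫ x in u..v, (upperEnvelope a f u v x - f x) := by
  have hcont : ContinuousOn (fun x => upperEnvelope a f u v x - f x) (Icc u v) :=
    ((continuousOn_of_abs_sub_le (abs_upperEnvelope_sub_le ha.le hf)).sub
      (continuousOn_of_abs_sub_le hf)).mono hs
  refine intervalIntegral.integral_pos huv hcont (fun x _ => sub_nonneg.2 le_upperEnvelope) ?_
  by_contra! hle
  exact hkink (isKinkOn_of_eqOn_upperEnvelope ha hf hs huv.le fun x hx =>
    le_antisymm (sub_nonpos.1 (hle x hx)) le_upperEnvelope)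

end Envelope

section EnvelopeMem

variable {a : ℝ} {f : ℝ → ℝ} {u v : ℝ}

lemma memFplus_upperEnvelope (ha : 0 ≤ a) (hf : memFplus a f) (hu : 0 < u) (huv : u ≤ v) :
    memFplus a (upperEnvelope a f u v) :=
  hf.of_eqOn_Ico hu
    ((eqOn_upperEnvelope hf.abs_sub_le hu.le (hu.le.trans huv)).mono
      fun _ (hx : _ ∈ Ico 0 u) => mem_sdiff_of_mem hx.1 fun h => lt_asymm h.1 hx.2)
    (fun _ hx => (hf.nonneg hx).trans le_upperEnvelope)
    (abs_upperEnvelope_sub_le ha hf.abs_sub_le)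

lemma memFplus_lowerEnvelope (ha : 0 ≤ a) (hf : memFplus a f) (hu : 0 < u) (huv : u ≤ v)
    (hfu : a * (v - u) ≤ f u) : memFplus a (lowerEnvelope a f u v) := by
  have hneg := abs_neg_sub_neg_le hf.abs_sub_le
  refine hf.of_eqOn_Ico hu ((eqOn_lowerEnvelope hf.abs_sub_le hu.le (hu.le.trans huv)).mono
    fun _ (hx : _ ∈ Ico 0 u) => mem_sdiff_of_mem hx.1 fun h => lt_asymm h.1 hx.2) ?_ ?_
  · intro x hx
    refine neg_nonneg.2 (max_le (neg_nonpos.2 (hf.nonneg hx)) ?_)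
    rcases le_or_gt x v with hxv | hvx
    · refine (min_le_left _ _).trans ?_
      simp only [Pi.neg_apply]
      nlinarith
    · refine (min_le_right _ _).trans ?_
      simp only [Pi.neg_apply]
      nlinarith [hf.nonneg (hu.le.trans huv)]
  · simpa only [lowerEnvelope, Pi.neg_apply, neg_sub_neg, abs_sub_comm] using
      abs_upperEnvelope_sub_le (u := u) (v := v) ha hneg

end EnvelopeMem

noncomputable def hplusIntegrand (a : ℝ) (φ : ℝ → ℝ) (y : ℝ) : ℝ :=
  hker a y (1 + φ y) + hker a y (1 - φ y)

/-- A competitor of finite energy: `h_a(y, 1 - tent a y) = h_a(y, a y) = 0` for `y ≤ a⁻¹`. -/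
noncomputable def tent (a x : ℝ) : ℝ := max (1 - a * x) 0

section Energy

variable {a : ℝ} {φ f : ℝ → ℝ}

lemma continuousOn_hker_comp {ψ : ℝ → ℝ} {S : Set ℝ} (hψ : ContinuousOn ψ S)
    (hS : ∀ y ∈ S, y ≠ 0) : ContinuousOn (fun y => hker a y (ψ y)) S := by
  refine ContinuousOn.div (by fun_prop) (by fun_prop) fun y hy => ?_
  have := hS y hy
  positivity

lemma memFplus.continuousOn_hker_one_add (hφ : memFplus a φ) {S : Set ℝ} (hS : S ⊆ Ioi 0) :
    ContinuousOn (fun y => hker a y (1 + φ y)) S :=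
  continuousOn_hker_comp (continuousOn_const.add (hφ.continuousOn.mono
    (hS.trans Ioi_subset_Ici_self))) fun _ hy => (hS hy).ne'

lemma memFplus.continuousOn_hker_one_sub (hφ : memFplus a φ) {S : Set ℝ} (hS : S ⊆ Ioi 0) :
    ContinuousOn (fun y => hker a y (1 - φ y)) S :=
  continuousOn_hker_comp (continuousOn_const.sub (hφ.continuousOn.mono
    (hS.trans Ioi_subset_Ici_self))) fun _ hy => (hS hy).ne'

lemma memFplus.continuousOn_hplusIntegrand (hφ : memFplus a φ) {S : Set ℝ} (hS : S ⊆ Ioi 0) :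
    ContinuousOn (hplusIntegrand a φ) S :=
  (hφ.continuousOn_hker_one_add hS).add (hφ.continuousOn_hker_one_sub hS)

lemma memFplus.integrableOn_hker_one_add (ha : 0 < a) (ha1 : a ≤ 1) (hφ : memFplus a φ) :
    IntegrableOn (fun y => hker a y (1 + φ y)) (Ioi 0) := by
  refine (integrable_inv_one_add_sq.const_mul (1 + (a⁻¹ - a) / 2)).integrableOn.mono'
    ((hφ.continuousOn_hker_one_add subset_rfl).aestronglyMeasurable measurableSet_Ioi) ?_
  refine ae_restrict_of_forall_mem measurableSet_Ioi fun y hy => ?_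
  exact abs_hker_le ha ha1 (le_add_of_nonneg_right (hφ.nonneg (le_of_lt hy)))

lemma memFplus.integrableOn_hker_one_sub (ha : 0 < a) (ha1 : a ≤ 1) (hφ : memFplus a φ)
    (hL : ∫⁻ y in Ioi 0, ENNReal.ofReal (hker a y (1 - φ y)) ≠ ⊤) :
    IntegrableOn (fun y => hker a y (1 - φ y)) (Ioi 0) :=
  ⟨(hφ.continuousOn_hker_one_sub subset_rfl).aestronglyMeasurable measurableSet_Ioi,
    (hasFiniteIntegral_iff_ofReal (ae_restrict_of_forall_mem measurableSet_Ioi fun _ hy =>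
      hker_nonneg ha ha1 hy (hφ.abs_one_sub_le (le_of_lt hy)))).2 hL.lt_top⟩

lemma memFplus.integrableOn_hplusIntegrand (ha : 0 < a) (ha1 : a ≤ 1) (hφ : memFplus a φ)
    (hL : ∫⁻ y in Ioi 0, ENNReal.ofReal (hker a y (1 - φ y)) ≠ ⊤) :
    IntegrableOn (hplusIntegrand a φ) (Ioi 0) :=
  (hφ.integrableOn_hker_one_add ha ha1).add (hφ.integrableOn_hker_one_sub ha ha1 hL)

lemma memFplus.Hplus_eq_integral (ha : 0 < a) (ha1 : a ≤ 1) (hφ : memFplus a φ)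
    (hL : ∫⁻ y in Ioi 0, ENNReal.ofReal (hker a y (1 - φ y)) ≠ ⊤) :
    Hplus a φ = ((∫ y in Ioi 0, hplusIntegrand a φ y : ℝ) : EReal) := by
  rw [Hplus, ← EReal.coe_ennreal_toReal hL, ← integral_eq_lintegral_of_nonneg_ae
    (ae_restrict_of_forall_mem measurableSet_Ioi fun _ hy =>
      hker_nonneg ha ha1 hy (hφ.abs_one_sub_le (le_of_lt hy)))
    ((hφ.continuousOn_hker_one_sub subset_rfl).aestronglyMeasurable measurableSet_Ioi),
    ← EReal.coe_add, ← integral_add (hφ.integrableOn_hker_one_add ha ha1)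
    (hφ.integrableOn_hker_one_sub ha ha1 hL)]
  rfl

lemma memFplus_tent (ha : 0 < a) : memFplus a (tent a) := by
  refine ⟨fun x _ => le_max_right _ _, fun x y _ _ => ?_, by simp [tent], ?_⟩
  · refine (abs_max_sub_max_le_max _ _ _ _).trans ?_
    rw [show 1 - a * x - (1 - a * y) = a * (y - x) by ring, abs_mul, abs_of_pos ha,
      abs_sub_comm, sub_self, abs_zero]
    exact max_le le_rfl (by positivity)
  · have hlin : HasDerivAt (fun x => 1 - a * x) (-a) 0 := by
      simpa using ((hasDerivAt_id (0 : ℝ)).const_mul a).const_sub 1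
    refine hlin.hasDerivWithinAt.congr_of_eventuallyEq ?_ (by simp [tent])
    refine eventually_nhdsWithin_of_eventually_nhds ?_
    filter_upwards [Iio_mem_nhds (inv_pos.2 ha)] with x hx
    refine max_eq_left ?_
    have := mul_lt_mul_of_pos_left (show x < a⁻¹ from hx) ha
    rw [mul_inv_cancel₀ ha.ne'] at this
    linarith

lemma hker_one_sub_tent_le (ha : 0 < a) (ha1 : a ≤ 1) {y : ℝ} (hy : 0 ≤ y) :
    hker a y (1 - tent a y) ≤ (1 + y ^ 2)⁻¹ := by
  rcases le_or_gt (a * y) 1 with hay | hay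
  · rw [tent, max_eq_left (by linarith), sub_sub_cancel, hker_mul_self ha.ne']
    positivity
  · rw [tent, max_eq_right (by linarith), sub_zero]
    exact hker_one_le ha ha1 hy

lemma lintegral_tent_ne_top (ha : 0 < a) (ha1 : a ≤ 1) :
    ∫⁻ y in Ioi 0, ENNReal.ofReal (hker a y (1 - tent a y)) ≠ ⊤ :=
  ((setLIntegral_mono' measurableSet_Ioi fun _ hy => ENNReal.ofReal_le_ofReal
    (hker_one_sub_tent_le ha ha1 (le_of_lt hy))).trans_lt
    integrable_inv_one_add_sq.restrict.lintegral_lt_top).ne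

lemma lintegral_ne_top_of_isMin (ha : 0 < a) (ha1 : a ≤ 1)
    (hmin : ∀ ψ : ℝ → ℝ, memFplus a ψ → Hplus a f ≤ Hplus a ψ) :
    ∫⁻ y in Ioi 0, ENNReal.ofReal (hker a y (1 - f y)) ≠ ⊤ := by
  intro htop
  have h := hmin (tent a) (memFplus_tent ha)
  rw [(memFplus_tent ha).Hplus_eq_integral ha ha1 (lintegral_tent_ne_top ha ha1), Hplus, htop,
    EReal.coe_ennreal_top, EReal.coe_add_top] at h
  exact EReal.coe_ne_top _ (top_le_iff.1 h)

lemma lintegral_ne_top_of_eqOn (hφ : memFplus a φ) {u v : ℝ} (hu : 0 < u)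
    (heq : EqOn φ f (Ici 0 \ Icc u v))
    (hL : ∫⁻ y in Ioi 0, ENNReal.ofReal (hker a y (1 - f y)) ≠ ⊤) :
    ∫⁻ y in Ioi 0, ENNReal.ofReal (hker a y (1 - φ y)) ≠ ⊤ := by
  have hIcc : Icc u v ⊆ Ioi 0 := fun y hy => hu.trans_le hy.1
  have hcompact : ∫⁻ y in Icc u v, ENNReal.ofReal (hker a y (1 - φ y)) < ⊤ :=
    ((hφ.continuousOn_hker_one_sub hIcc).integrableOn_compact isCompact_Icc).lintegral_lt_top
  refine (lt_of_le_of_lt ?_ (ENNReal.add_lt_top.2 ⟨hL.lt_top, hcompact⟩)).ne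
  calc ∫⁻ y in Ioi 0, ENNReal.ofReal (hker a y (1 - φ y))
      ≤ ∫⁻ y in (Ioi 0 \ Icc u v) ∪ Icc u v, ENNReal.ofReal (hker a y (1 - φ y)) :=
        lintegral_mono_set (by rw [sdiff_union_self]; exact subset_union_left)
    _ ≤ (∫⁻ y in Ioi 0 \ Icc u v, ENNReal.ofReal (hker a y (1 - φ y))) +
          ∫⁻ y in Icc u v, ENNReal.ofReal (hker a y (1 - φ y)) := lintegral_union_le _ _ _
    _ = (∫⁻ y in Ioi 0 \ Icc u v, ENNReal.ofReal (hker a y (1 - f y))) +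
          ∫⁻ y in Icc u v, ENNReal.ofReal (hker a y (1 - φ y)) := by
        rw [setLIntegral_congr_fun (measurableSet_Ioi.diff measurableSet_Icc) fun y hy => by
          rw [heq ⟨Ioi_subset_Ici_self hy.1, hy.2⟩]]
    _ ≤ _ := add_le_add_left (lintegral_mono_set sdiff_subset) _

lemma integral_hplusIntegrand_sub_nonneg (ha : 0 < a) (ha1 : a ≤ 1) (hf : memFplus a f)
    (hmin : ∀ ψ : ℝ → ℝ, memFplus a ψ → Hplus a f ≤ Hplus a ψ) (hφ : memFplus a φ)
    {u v : ℝ} (hu : 0 < u) (huv : u ≤ v) (heq : EqOn φ f (Ici 0 \ Icc u v)) :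
    0 ≤ ∫ y in u..v, (hplusIntegrand a φ y - hplusIntegrand a f y) := by
  have hLf := lintegral_ne_top_of_isMin ha ha1 hmin
  have hLφ := lintegral_ne_top_of_eqOn hφ hu heq hLf
  have h := hmin φ hφ
  rw [hf.Hplus_eq_integral ha ha1 hLf, hφ.Hplus_eq_integral ha ha1 hLφ,
    EReal.coe_le_coe_iff] at h
  rw [intervalIntegral.integral_of_le huv, ← integral_Icc_eq_integral_Ioc,
    ← setIntegral_eq_of_subset_of_forall_sdiff_eq_zero measurableSet_Ioi
      (fun y hy => hu.trans_le hy.1) fun y hy => by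
        rw [hplusIntegrand, hplusIntegrand, heq ⟨Ioi_subset_Ici_self hy.1, hy.2⟩, sub_self],
    integral_sub (hφ.integrableOn_hplusIntegrand ha ha1 hLφ)
      (hf.integrableOn_hplusIntegrand ha ha1 hLf)]
  linarith

end Energy

section FirstVariation

variable {a p : ℝ} {f : ℝ → ℝ}

lemma hker_add_hker_linearization (hp : 0 < p) (q : ℝ) {ε : ℝ} (hε : 0 < ε) :
    ∃ δ > 0, δ ≤ p ∧ ∀ y r r', |y - p| < δ → |r - q| < δ → |r' - q| < δ →
      hker a y (1 + r') + hker a y (1 - r') - (hker a y (1 + r) + hker a y (1 - r)) ≤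
        (hkerDeriv a p (1 + q) - hkerDeriv a p (1 - q)) * (r' - r) + 2 * ε * |r' - r| := by
  obtain ⟨δ₁, hδ₁, hlin₁⟩ := hker_linearization (a := a) hp (1 + q) hε
  obtain ⟨δ₂, hδ₂, hlin₂⟩ := hker_linearization (a := a) hp (1 - q) hε
  refine ⟨min (min δ₁ δ₂) p, by positivity, min_le_right _ _, fun y r r' hy hr hr' => ?_⟩
  have hδ₁' := (min_le_left (min δ₁ δ₂) p).trans (min_le_left δ₁ δ₂)
  have hδ₂' := (min_le_left (min δ₁ δ₂) p).trans (min_le_right δ₁ δ₂)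
  have hplus := abs_le.1 <| hlin₁ y (1 + r) (1 + r') (by linarith)
    (by rw [add_sub_add_left_eq_sub]; linarith) (by rw [add_sub_add_left_eq_sub]; linarith)
  have hminus := abs_le.1 <| hlin₂ y (1 - r) (1 - r') (by linarith)
    (by rw [sub_sub_sub_cancel_left, abs_sub_comm]; linarith)
    (by rw [sub_sub_sub_cancel_left, abs_sub_comm]; linarith)
  rw [add_sub_add_left_eq_sub] at hplus
  rw [sub_sub_sub_cancel_left, abs_sub_comm] at hminus
  nlinarith [hplus.2, hminus.2]

lemma first_variation (ha : 0 < a) (ha1 : a ≤ 1) (hf : memFplus a f)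
    (hmin : ∀ ψ : ℝ → ℝ, memFplus a ψ → Hplus a f ≤ Hplus a ψ) (hp : 0 < p) {ε : ℝ}
    (hε : 0 < ε) :
    ∃ δ > 0, δ ≤ p ∧ ∀ (φ : ℝ → ℝ) (u v : ℝ), memFplus a φ → EqOn φ f (Ici 0 \ Icc u v) →
      u ≤ v → p - δ < u → v < p + δ → (∀ y ∈ Icc u v, |φ y - f y| < δ) →
      0 ≤ (hkerDeriv a p (1 + f p) - hkerDeriv a p (1 - f p)) * (∫ y in u..v, (φ y - f y)) +
        2 * ε * ∫ y in u..v, |φ y - f y| := by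
  obtain ⟨δ, hδ, hδp, hlin⟩ := hker_add_hker_linearization (a := a) hp (f p) hε
  refine ⟨δ / 2, by positivity, by linarith, fun φ u v hφ heq huv hu hv hclose => ?_⟩
  have hu0 : 0 < u := by linarith
  have hIcc : Icc u v ⊆ Ioi 0 := fun y hy => hu0.trans_le hy.1
  have hpoint : ∀ y ∈ Icc u v, hplusIntegrand a φ y - hplusIntegrand a f y ≤
      (hkerDeriv a p (1 + f p) - hkerDeriv a p (1 - f p)) * (φ y - f y) +
        2 * ε * |φ y - f y| := by
    intro y hy
    have hyp : |y - p| < δ / 2 := abs_lt.2 ⟨by linarith [hy.1], by linarith [hy.2]⟩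
    have hfy : |f y - f p| < δ / 2 := by
      refine (hf.abs_sub_le y (Ioi_subset_Ici_self (hIcc hy)) p hp.le).trans_lt ?_
      nlinarith [abs_nonneg (y - p)]
    exact hlin y (f y) (φ y) (by linarith) (by linarith)
      (by linarith [abs_sub_le (φ y) (f y) (f p), hclose y hy])
  have hcont : ContinuousOn (fun y => φ y - f y) (Icc u v) :=
    (hφ.continuousOn.sub hf.continuousOn).mono (hIcc.trans Ioi_subset_Ici_self)
  calc (0 : ℝ) ≤ ∫ y in u..v, (hplusIntegrand a φ y - hplusIntegrand a f y) :=
        integral_hplusIntegrand_sub_nonneg ha ha1 hf hmin hφ hu0 huv heq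
    _ ≤ ∫ y in u..v, ((hkerDeriv a p (1 + f p) - hkerDeriv a p (1 - f p)) * (φ y - f y) +
          2 * ε * |φ y - f y|) :=
        intervalIntegral.integral_mono_on huv
          (((hφ.continuousOn_hplusIntegrand hIcc).sub
            (hf.continuousOn_hplusIntegrand hIcc)).intervalIntegrable_of_Icc huv)
          (((continuousOn_const.mul hcont).add
            (continuousOn_const.mul hcont.abs)).intervalIntegrable_of_Icc huv)
          hpoint
    _ = _ := by
        rw [intervalIntegral.integral_add ((hcont.intervalIntegrable_of_Icc huv).const_mul _)
          ((hcont.abs.intervalIntegrable_of_Icc huv).const_mul _),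
          intervalIntegral.integral_const_mul, intervalIntegral.integral_const_mul]

lemma gfun_one_sub_le_of_admitsNonKinkNear (ha : 0 < a) (ha1 : a ≤ 1) (hf : memFplus a f)
    (hmin : ∀ ψ : ℝ → ℝ, memFplus a ψ → Hplus a f ≤ Hplus a ψ) (hp : 0 < p)
    (hkink : AdmitsNonKinkNear f a p) :
    gfun a ((1 - f p) / p) ≤ gfun a ((1 + f p) / p) := by
  rw [gfun_div_eq hp.ne', gfun_div_eq hp.ne']
  refine mul_le_mul_of_nonneg_left (le_of_forall_pos_le_add fun ε hε => ?_) (by positivity)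
  obtain ⟨δ, hδ, hδp, hvar⟩ := first_variation ha ha1 hf hmin hp (half_pos hε)
  obtain ⟨u, v, hu, huv, hv, hnk⟩ := hkink (δ / 4) (by positivity)
  have hu0 : 0 < u := by linarith
  have hIcc : Icc u v ⊆ Ici 0 := fun y hy => hu0.le.trans hy.1
  have hpos := integral_upperEnvelope_sub_pos ha hf.abs_sub_le hIcc huv hnk
  have hvar := hvar (upperEnvelope a f u v) u v (memFplus_upperEnvelope ha.le hf hu0 huv.le)
    ((eqOn_upperEnvelope hf.abs_sub_le hu0.le (hIcc ⟨huv.le, le_rfl⟩)).mono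
      (sdiff_subset_sdiff_right Ioo_subset_Icc_self)) huv.le (by linarith) (by linarith)
    fun y hy => by
      rw [abs_of_nonneg (sub_nonneg.2 le_upperEnvelope)]
      exact (upperEnvelope_sub_le ha.le hf.abs_sub_le hIcc hy).trans_lt (by nlinarith)
  rw [intervalIntegral.integral_congr fun y _ => abs_of_nonneg (sub_nonneg.2 le_upperEnvelope)]
    at hvar
  nlinarith

lemma gfun_one_add_le_of_admitsNonKinkNear (ha : 0 < a) (ha1 : a ≤ 1) (hf : memFplus a f)
    (hmin : ∀ ψ : ℝ → ℝ, memFplus a ψ → Hplus a f ≤ Hplus a ψ) (hp : 0 < p)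
    (hkink : AdmitsNonKinkNear f (-a) p) :
    gfun a ((1 + f p) / p) ≤ gfun a ((1 - f p) / p) := by
  rcases (hf.nonneg hp.le).eq_or_lt with hfp | hfp
  · rw [← hfp, add_zero, sub_zero]
  rw [gfun_div_eq hp.ne', gfun_div_eq hp.ne']
  refine mul_le_mul_of_nonneg_left (le_of_forall_pos_le_add fun ε hε => ?_) (by positivity)
  obtain ⟨δ, hδ, hδp, hvar⟩ := first_variation ha ha1 hf hmin hp (half_pos hε)
  obtain ⟨η, hη, hηδ, hηf⟩ : ∃ η > 0, η ≤ δ / 4 ∧ η ≤ f p / 4 :=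
    ⟨min (δ / 4) (f p / 4), by positivity, min_le_left _ _, min_le_right _ _⟩
  obtain ⟨u, v, hu, huv, hv, hnk⟩ := hkink η hη
  have hu0 : 0 < u := by linarith
  have hIcc : Icc u v ⊆ Ici 0 := fun y hy => hu0.le.trans hy.1
  have hneg := abs_neg_sub_neg_le hf.abs_sub_le
  have hpos := integral_upperEnvelope_sub_pos ha hneg hIcc huv (by rwa [isKinkOn_neg_iff])
  have hfu : a * (v - u) ≤ f u := by
    have hpu : |p - u| < f p / 4 := abs_lt.2 ⟨by linarith, by linarith⟩
    have := (abs_le.1 (hf.abs_sub_le p hp.le u hu0.le)).2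
    nlinarith [abs_nonneg (p - u)]
  have hvar := hvar (lowerEnvelope a f u v) u v (memFplus_lowerEnvelope ha.le hf hu0 huv.le hfu)
    ((eqOn_lowerEnvelope hf.abs_sub_le hu0.le (hIcc ⟨huv.le, le_rfl⟩)).mono
      (sdiff_subset_sdiff_right Ioo_subset_Icc_self)) huv.le (by linarith) (by linarith)
    fun y hy => by
      rw [lowerEnvelope_sub_eq, abs_neg, abs_of_nonneg (sub_nonneg.2 le_upperEnvelope)]
      exact (upperEnvelope_sub_le ha.le hneg hIcc hy).trans_lt (by nlinarith)
  simp only [lowerEnvelope_sub_eq, abs_neg, abs_of_nonneg (sub_nonneg.2 le_upperEnvelope),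
    intervalIntegral.integral_neg] at hvar
  nlinarith

end FirstVariation

/-- Lemma 3.1: first-variation conditions satisfied by any minimizer of `H⁺` on `F⁺`. -/
theorem minimizer_first_variation
    (a : ℝ) (ha : 0 < a) (ha' : a ≤ 3 / 10)
    (f : ℝ → ℝ) (hf : memFplus a f)
    (hmin : ∀ φ : ℝ → ℝ, memFplus a φ → Hplus a f ≤ Hplus a φ)
    (p : ℝ) (hp : 0 < p) :
    ((∀ ε : ℝ, 0 < ε →
        ¬ derivAEeq f (Ioo p (p + ε)) a ∧ ¬ derivAEeq f (Ioo p (p + ε)) (-a)) →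
      gfun a ((1 + f p) / p) = gfun a ((1 - f p) / p)) ∧
    ((∀ ε : ℝ, 0 < ε →
        ¬ derivAEeq f (Ioo (p - ε) p) a ∧ ¬ derivAEeq f (Ioo (p - ε) p) (-a)) →
      gfun a ((1 + f p) / p) = gfun a ((1 - f p) / p)) ∧
    ((∃ ε : ℝ, 0 < ε ∧
        derivAEeq f (Ioo (p - ε) p) (-a) ∧ derivAEeq f (Ioo p (p + ε)) a) →
      gfun a ((1 + f p) / p) ≥ gfun a ((1 - f p) / p)) ∧
    ((∃ ε : ℝ, 0 < ε ∧
        derivAEeq f (Ioo (p - ε) p) a ∧ derivAEeq f (Ioo p (p + ε)) (-a)) →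
      gfun a ((1 + f p) / p) ≤ gfun a ((1 - f p) / p)) := by
  have ha1 : a ≤ 1 := by linarith
  have up := gfun_one_sub_le_of_admitsNonKinkNear ha ha1 hf hmin hp
  have down := gfun_one_add_le_of_admitsNonKinkNear ha ha1 hf hmin hp
  have flip : ∀ {S : Set ℝ}, ¬derivAEeq f S a ∧ ¬derivAEeq f S (-a) →
      ¬derivAEeq f S (-a) ∧ ¬derivAEeq f S (-(-a)) := fun h => by
    rw [neg_neg]
    exact h.symm
  refine ⟨fun h => ?_, fun h => ?_, ?_, ?_⟩
  · exact le_antisymm (down (admitsNonKinkNear_of_right fun ε hε => flip (h ε hε)))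
      (up (admitsNonKinkNear_of_right h))
  · exact le_antisymm (down (admitsNonKinkNear_of_left fun ε hε => flip (h ε hε)))
      (up (admitsNonKinkNear_of_left h))
  · rintro ⟨ε, hε, hleft, hright⟩
    exact up (admitsNonKinkNear_of_corner ha.ne' hε hleft hright)
  · rintro ⟨ε, hε, hleft, hright⟩
    exact down (admitsNonKinkNear_of_corner (neg_ne_zero.2 ha.ne') hε (by rwa [neg_neg]) hright)
end

section
/- Let γ ∈ (0,1], let f : ℝ → ℝ be twice differentiable with M := sup_{x∈ℝ} |f'(x)| < ∞, and suppose there is H ≥ 0 such that |f''(x) − f''(y)| ≤ H·|x−y|^γ for all x, y ∈ ℝ. Then for every x ∈ ℝ, |f''(x)| ≤ 2·H^{1/(1+γ)}·(M − |f'(x)|)^{γ/(1+γ)}. -/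
/-!
Taylor's formula with the Hölder bound on `f''` gives
`|f'(x + t) - f'(x) - t f''(x)| ≤ H |t|^(1+γ) / (1+γ)`. Taking `t = ±T` with the sign for which
`f'(x)` and `t f''(x)` agree, and using `|f'(x + t)| ≤ M`, yields
`|f''(x)| T - H T^(1+γ) / (1+γ) ≤ M - |f'(x)|` for every `T ≥ 0`; the choice
`H T^γ = |f''(x)| / 2` turns this into the stated bound.
-/

section HolderRemainder

variable {E : Type*} [NormedAddCommGroup E] [NormedSpace ℝ E] {H γ : ℝ}

theorem hasDerivAt_mul_rpow_one_add_div (H : ℝ) (hγ : 0 ≤ γ) (s : ℝ) :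
    HasDerivAt (fun s : ℝ => H * s ^ (1 + γ) / (1 + γ)) (H * s ^ γ) s := by
  have hγ1 : (1 + γ) ≠ 0 := by linarith
  refine (((Real.hasDerivAt_rpow_const (Or.inr (by linarith))).const_mul H).div_const
    (1 + γ)).congr_deriv ?_
  rw [add_sub_cancel_left]
  field_simp

theorem norm_le_of_norm_deriv_le_mul_rpow_of_nonneg {φ φ' : ℝ → E} (hγ : 0 ≤ γ)
    (hφ : ∀ s, HasDerivAt φ (φ' s) s) (hφ0 : φ 0 = 0) (hbound : ∀ s, ‖φ' s‖ ≤ H * |s| ^ γ)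
    {t : ℝ} (ht : 0 ≤ t) : ‖φ t‖ ≤ H * t ^ (1 + γ) / (1 + γ) := by
  refine image_norm_le_of_norm_deriv_right_le_deriv_boundary (a := 0) (b := t)
    (fun s _ => (hφ s).continuousAt.continuousWithinAt) (fun s _ => (hφ s).hasDerivWithinAt)
    ?_ (hasDerivAt_mul_rpow_one_add_div H hγ) (fun s hs => ?_) ⟨ht, le_rfl⟩
  · simp [hφ0, Real.zero_rpow (by linarith : (1 + γ) ≠ 0)]
  · simpa [abs_of_nonneg hs.1] using hbound s

theorem norm_le_of_norm_deriv_le_mul_rpow {φ φ' : ℝ → E} (hγ : 0 ≤ γ)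
    (hφ : ∀ s, HasDerivAt φ (φ' s) s) (hφ0 : φ 0 = 0) (hbound : ∀ s, ‖φ' s‖ ≤ H * |s| ^ γ)
    (t : ℝ) : ‖φ t‖ ≤ H * |t| ^ (1 + γ) / (1 + γ) := by
  rcases le_total 0 t with ht | ht
  · simpa [abs_of_nonneg ht] using norm_le_of_norm_deriv_le_mul_rpow_of_nonneg hγ hφ hφ0 hbound ht
  · have hψ : ∀ s, HasDerivAt (fun s => φ (-s)) (-φ' (-s)) s := fun s => by
      simpa [Function.comp_def] using (hφ (-s)).scomp s (hasDerivAt_neg s)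
    simpa [abs_of_nonpos ht] using norm_le_of_norm_deriv_le_mul_rpow_of_nonneg hγ hψ
      (by simpa using hφ0) (fun s => by simpa using hbound (-s)) (neg_nonneg.2 ht)

theorem norm_sub_sub_smul_deriv_le_of_holder {g g' : ℝ → E} (hγ : 0 ≤ γ)
    (hg : ∀ y, HasDerivAt g (g' y) y) (x : ℝ) (hHol : ∀ y, ‖g' y - g' x‖ ≤ H * |y - x| ^ γ)
    (t : ℝ) : ‖g (x + t) - g x - t • g' x‖ ≤ H * |t| ^ (1 + γ) / (1 + γ) := by
  refine norm_le_of_norm_deriv_le_mul_rpow (φ := fun t => g (x + t) - g x - t • g' x)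
    (φ' := fun s => g' (x + s) - g' x) hγ (fun s => ?_) (by simp) (fun s => by
      simpa using hHol (x + s)) t
  exact ((((hg (x + s)).comp_const_add x s).sub_const (g x)).sub
    ((hasDerivAt_id s).smul_const (g' x))).congr_deriv (by simp)

end HolderRemainder

theorem abs_add_abs_le_max_abs_add_abs_sub (a b : ℝ) : |a| + |b| ≤ max |a + b| |a - b| := by
  rcases abs_cases a with ⟨ha, _⟩ | ⟨ha, _⟩ <;> rcases abs_cases b with ⟨hb, _⟩ | ⟨hb, _⟩ <;>
    simp only [ha, hb, le_max_iff]
  · exact Or.inl (le_abs_self _)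
  · exact Or.inr (by rw [sub_eq_add_neg]; exact le_abs_self _)
  · exact Or.inr (by rw [abs_sub_comm]; linarith [le_abs_self (b - a)])
  · exact Or.inl (by linarith [neg_abs_le (a + b)])

section Optimization

variable {c D H γ : ℝ}

theorem le_two_mul_rpow_of_rpow_one_add_le (hγ : -1 < γ) (hH : 0 ≤ H) (hc : 0 ≤ c) (hD : 0 ≤ D)
    (h : c ^ (1 + γ) ≤ 2 ^ (1 + γ) * H * D ^ γ) :
    c ≤ 2 * H ^ (1 / (1 + γ)) * D ^ (γ / (1 + γ)) := by
  have hp : 0 < 1 + γ := by linarith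
  have hrhs : 2 * H ^ (1 / (1 + γ)) * D ^ (γ / (1 + γ)) =
      (2 ^ (1 + γ) * H * D ^ γ) ^ (1 + γ)⁻¹ := by
    rw [Real.mul_rpow (by positivity) (by positivity), Real.mul_rpow (by positivity) hH,
      ← Real.rpow_mul zero_le_two, ← Real.rpow_mul hD, mul_inv_cancel₀ hp.ne', Real.rpow_one,
      one_div, div_eq_mul_inv]
  rw [hrhs, Real.le_rpow_inv_iff_of_pos hc (by positivity) hp]
  exact h

theorem le_two_mul_rpow_of_forall_mul_sub_rpow_le (hγ : 0 < γ) (hH : 0 ≤ H) (hc : 0 ≤ c)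
    (h : ∀ T, 0 ≤ T → c * T - H * T ^ (1 + γ) / (1 + γ) ≤ D) :
    c ≤ 2 * H ^ (1 / (1 + γ)) * D ^ (γ / (1 + γ)) := by
  have hp : 0 < 1 + γ := by linarith
  have hD : 0 ≤ D := by simpa [Real.zero_rpow hp.ne'] using h 0 le_rfl
  rcases hc.eq_or_lt with rfl | hc
  · positivity
  rcases hH.eq_or_lt with rfl | hH
  · have := h ((D + 1) / c) (by positivity)
    rw [mul_div_cancel₀ _ hc.ne'] at this
    norm_num at this
  -- the maximiser of `T ↦ c T - H T^(1+γ)/(1+γ)` solves `H T^γ = c`; halving `c` keeps the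
  -- arithmetic simple at the cost of the factor `2`
  set T := (c / (2 * H)) ^ γ⁻¹
  have hT : 0 < T := by positivity
  have hTγ : T ^ γ = c / (2 * H) := by
    rw [← Real.rpow_mul (by positivity), inv_mul_cancel₀ hγ.ne', Real.rpow_one]
  have hcT : c * T ≤ 2 * D := by
    have hrem : H * T ^ (1 + γ) = c * T / 2 := by
      rw [Real.rpow_add hT, Real.rpow_one, hTγ]
      field_simp
    have := h T hT.le
    rw [hrem] at this
    have : c * T / 2 / (1 + γ) ≤ c * T / 2 := div_le_self (by positivity) (by linarith)
    linarith
  refine le_two_mul_rpow_of_rpow_one_add_le (by linarith) hH.le hc.le hD ?_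
  calc c ^ (1 + γ) = 2 * H * (c * T) ^ γ := by
        rw [Real.mul_rpow hc.le hT.le, hTγ, Real.rpow_add hc, Real.rpow_one]
        field_simp
    _ ≤ 2 * H * (2 * D) ^ γ := by gcongr
    _ = 2 ^ (1 + γ) * H * D ^ γ := by
        rw [Real.mul_rpow zero_le_two hD, Real.rpow_add two_pos, Real.rpow_one]
        ring

end Optimization

theorem abs_deriv_mul_sub_rpow_le_sub_abs_of_abs_le {fd fdd : ℝ → ℝ} {H M γ : ℝ} (hγ : 0 ≤ γ)
    (hfdd : ∀ x, HasDerivAt fd (fdd x) x) (hM : ∀ z, |fd z| ≤ M)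
    (x : ℝ) (hHol : ∀ y, |fdd y - fdd x| ≤ H * |y - x| ^ γ) {T : ℝ} (hT : 0 ≤ T) :
    |fdd x| * T - H * T ^ (1 + γ) / (1 + γ) ≤ M - |fd x| := by
  have hstep : ∀ t, |fd x + t * fdd x| ≤ M + H * |t| ^ (1 + γ) / (1 + γ) := by
    intro t
    have hrem : |fd (x + t) - fd x - t * fdd x| ≤ H * |t| ^ (1 + γ) / (1 + γ) :=
      norm_sub_sub_smul_deriv_le_of_holder hγ hfdd x hHol t
    calc |fd x + t * fdd x| = |fd (x + t) - (fd (x + t) - fd x - t * fdd x)| := by ring_nf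
      _ ≤ |fd (x + t)| + |fd (x + t) - fd x - t * fdd x| := abs_sub _ _
      _ ≤ _ := add_le_add (hM (x + t)) hrem
  have hforward := hstep T
  have hbackward := hstep (-T)
  rw [abs_neg, neg_mul, ← sub_eq_add_neg] at hbackward
  rw [abs_of_nonneg hT] at hforward hbackward
  have := abs_add_abs_le_max_abs_add_abs_sub (fd x) (T * fdd x)
  rw [abs_mul, abs_of_nonneg hT] at this
  have := this.trans (max_le hforward hbackward)
  linarith

theorem second_derivative_interpolation_general
    (γ : ℝ) (hγ0 : 0 < γ)
    (fd fdd : ℝ → ℝ)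
    (hfdd : ∀ x, HasDerivAt fd (fdd x) x)
    (hbdd : BddAbove (Set.range fun x => |fd x|))
    (H : ℝ) (hH : 0 ≤ H)
    (hHol : ∀ x y : ℝ, |fdd x - fdd y| ≤ H * |x - y| ^ γ) :
    ∀ x : ℝ, |fdd x| ≤
      2 * H ^ ((1:ℝ) / (1 + γ)) * ((⨆ z : ℝ, |fd z|) - |fd x|) ^ (γ / (1 + γ)) := by
  intro x
  refine le_two_mul_rpow_of_forall_mul_sub_rpow_le hγ0 hH (abs_nonneg _) fun T hT => ?_
  exact abs_deriv_mul_sub_rpow_le_sub_abs_of_abs_le hγ0.le hfdd (le_ciSup hbdd) x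
    (fun y => hHol y x) hT

/-- Interpolation bound: if `f` is twice differentiable, `|f'| ≤ M := sup|f'| < ∞`, and `f''`
is `γ`-Hölder with constant `H`, then `|f''(x)| ≤ 2·H^{1/(1+γ)}·(M − |f'(x)|)^{γ/(1+γ)}`. -/
theorem second_derivative_interpolation
    (γ : ℝ) (hγ0 : 0 < γ) (hγ1 : γ ≤ 1)
    (f fd fdd : ℝ → ℝ)
    (hfd : ∀ x, HasDerivAt f (fd x) x)
    (hfdd : ∀ x, HasDerivAt fd (fdd x) x)
    (hbdd : BddAbove (Set.range fun x => |fd x|))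
    (H : ℝ) (hH : 0 ≤ H)
    (hHol : ∀ x y : ℝ, |fdd x - fdd y| ≤ H * |x - y| ^ γ) :
    ∀ x : ℝ, |fdd x| ≤
      2 * H ^ ((1:ℝ) / (1 + γ)) * ((⨆ z : ℝ, |fd z|) - |fd x|) ^ (γ / (1 + γ)) :=
  second_derivative_interpolation_general γ hγ0 fd fdd hfdd hbdd H hH hHol
end

section
/- Let a ∈ (0,3/10], b ∈ [−a, a), and s₀ < 0. Then ∫_{s₀−a}^{s₀−b} g_a(s) ds > ∫_b^a g_a(s) ds. -/
open Set

theorem continuous_gfun (a : ℝ) : Continuous (gfun a) :=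
  Continuous.div (by fun_prop) (by fun_prop) fun s ↦ by positivity

theorem hasDerivAt_gfun (a s : ℝ) :
    HasDerivAt (gfun a)
      (-6 * (s ^ 4 + 2 * (a⁻¹ - a) * s ^ 3 - 6 * s ^ 2 - 2 * (a⁻¹ - a) * s + 1) / (1 + s ^ 2) ^ 4)
      s := by
  have hN : HasDerivAt (fun s ↦ 2 * s ^ 3 + 3 * (a⁻¹ - a) * s ^ 2 - 6 * s - (a⁻¹ - a))
      (6 * s ^ 2 + 6 * (a⁻¹ - a) * s - 6) s :=
    ((((hasDerivAt_pow 3 s).const_mul 2).add ((hasDerivAt_pow 2 s).const_mul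
      (3 * (a⁻¹ - a)))).sub ((hasDerivAt_id s).const_mul 6)).sub_const (a⁻¹ - a)
      |>.congr_deriv (by simp only [Nat.cast_ofNat, Nat.add_one_sub_one, pow_one]; ring)
  have hD : HasDerivAt (fun s ↦ (1 + s ^ 2) ^ 3) (6 * s * (1 + s ^ 2) ^ 2) s :=
    ((hasDerivAt_pow 2 s).const_add 1).pow 3
      |>.congr_deriv (by simp only [Nat.cast_ofNat, Nat.add_one_sub_one, pow_one]; ring)
  refine (hN.div hD (by positivity)).congr_deriv ?_
  field_simp
  ring

theorem gfun_strictAntiOn {a : ℝ} (ha : 0 < a) (ha1 : a ≤ 1) :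
    StrictAntiOn (gfun a) (Icc (-(2 / 5)) 0) := by
  refine strictAntiOn_of_deriv_neg (convex_Icc _ _) (continuous_gfun a).continuousOn ?_
  intro s hs
  rw [interior_Icc] at hs
  obtain ⟨hs₁, hs₂⟩ := hs
  have hA : 0 ≤ a⁻¹ - a := sub_nonneg.2 (ha1.trans ((one_le_inv₀ ha).2 ha1))
  have hP : 0 < s ^ 4 + 2 * (a⁻¹ - a) * s ^ 3 - 6 * s ^ 2 - 2 * (a⁻¹ - a) * s + 1 := by
    have hodd : 0 ≤ 2 * (a⁻¹ - a) * (s * (s ^ 2 - 1)) :=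
      mul_nonneg (by positivity) (mul_nonneg_of_nonpos_of_nonpos hs₂.le (by nlinarith))
    nlinarith [sq_nonneg (s ^ 2)]
  rw [(hasDerivAt_gfun a s).deriv]
  exact div_neg_of_neg_of_pos (by linarith) (by positivity)

theorem gfun_le_gfun_neg (a : ℝ) {v : ℝ} (hv : 0 ≤ v) (hv3 : v ^ 2 ≤ 3) :
    gfun a v ≤ gfun a (-v) := by
  unfold gfun
  rw [neg_sq]
  gcongr ?_ / _
  nlinarith [mul_nonneg hv (sub_nonneg.2 hv3)]

theorem mul_gfun_neg {a : ℝ} (ha : a ≠ 0) (t : ℝ) :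
    a * gfun a (-t) =
      (3 * (1 - a ^ 2) * t ^ 2 - (1 - a ^ 2) + 2 * a * t * (3 - t ^ 2)) / (1 + t ^ 2) ^ 3 := by
  unfold gfun
  field_simp
  ring

theorem gfun_neg_le_gfun_neg {a t : ℝ} (ha : 0 < a) (ha' : a ≤ 3 / 10) (hat : a ≤ t) :
    gfun a (-a) ≤ gfun a (-t) := by
  rw [← mul_le_mul_iff_of_pos_left ha, mul_gfun_neg ha.ne', mul_gfun_neg ha.ne',
    div_le_div_iff₀ (by positivity) (by positivity)]
  obtain ⟨u, hu, rfl⟩ : ∃ u, 0 ≤ u ∧ t = a + u := ⟨t - a, by linarith, by ring⟩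
  set p₁ := 3 - 4 * a ^ 2 - 14 * a ^ 4 - 4 * a ^ 6 + 3 * a ^ 8
  set p₂ := 6 - 12 * a ^ 2 - 168 * a ^ 4 - 84 * a ^ 6 + 66 * a ^ 8
  set p₃ := 10 * a - 106 * a ^ 3 - 146 * a ^ 5 + 98 * a ^ 7
  set p₄ := 3 - 15 * a ^ 2 - 135 * a ^ 4 + 75 * a ^ 6
  set p₆ := 1 - 10 * a ^ 2 + 5 * a ^ 4
  have hexpand :
      (3 * (1 - a ^ 2) * (a + u) ^ 2 - (1 - a ^ 2) + 2 * a * (a + u) * (3 - (a + u) ^ 2))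
          * (1 + a ^ 2) ^ 3
        - (3 * (1 - a ^ 2) * a ^ 2 - (1 - a ^ 2) + 2 * a * a * (3 - a ^ 2)) * (1 + (a + u) ^ 2) ^ 3
      = 6 * a * p₁ * u + p₂ * u ^ 2 + p₃ * u ^ 3 + p₄ * u ^ 4 + 6 * a * p₆ * u ^ 5 + p₆ * u ^ 6 := by
    ring
  have ha2 : a ^ 2 ≤ 9 / 100 := by nlinarith
  have ha4 : 0 ≤ a ^ 4 := by positivity
  have hp₁ : 0 ≤ p₁ := by nlinarith
  have hp₂ : 1 ≤ p₂ := by nlinarith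
  have hp₃ : -1 ≤ p₃ := by nlinarith
  have hp₄ : 1 / 2 ≤ p₄ := by nlinarith
  have hp₆ : 0 ≤ p₆ := by nlinarith
  -- Only the `u³` coefficient can be negative; the `u²` and `u⁴` terms absorb it.
  have hquartic : 0 ≤ u ^ 2 * (1 - u + u ^ 2 / 2) :=
    mul_nonneg (sq_nonneg u) (by nlinarith [sq_nonneg (u - 1)])
  nlinarith [mul_nonneg (mul_nonneg ha.le hp₁) hu, mul_le_mul_of_nonneg_right hp₂ (sq_nonneg u),
    mul_le_mul_of_nonneg_right hp₃ (pow_nonneg hu 3),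
    mul_le_mul_of_nonneg_right hp₄ (pow_nonneg hu 4),
    mul_nonneg (mul_nonneg ha.le hp₆) (pow_nonneg hu 5), mul_nonneg hp₆ (pow_nonneg hu 6)]

theorem gfun_lt_gfun_of_nonpos {a v w : ℝ} (ha : 0 < a) (ha' : a ≤ 3 / 10)
    (hav : -a < v) (hv : v ≤ 0) (hwv : w < v) : gfun a v < gfun a w := by
  have hmono := gfun_strictAntiOn ha (by linarith)
  rcases le_or_gt (-a) w with haw | hwa
  · exact hmono ⟨by linarith, by linarith⟩ ⟨by linarith, hv⟩ hwv
  · calc gfun a v < gfun a (-a) := hmono ⟨by linarith, by linarith⟩ ⟨by linarith, hv⟩ hav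
      _ ≤ gfun a (-(-w)) := gfun_neg_le_gfun_neg ha ha' (by linarith)
      _ = gfun a w := by rw [neg_neg]

theorem gfun_lt_gfun {a v w : ℝ} (ha : 0 < a) (ha' : a ≤ 3 / 10)
    (hav : -a < v) (hva : v < a) (hwv : w < v) (hwv' : w + v < 0) : gfun a v < gfun a w := by
  rcases le_or_gt v 0 with hv | hv
  · exact gfun_lt_gfun_of_nonpos ha ha' hav hv hwv
  · calc gfun a v ≤ gfun a (-v) := gfun_le_gfun_neg a hv.le (by nlinarith)
      _ < gfun a w := gfun_lt_gfun_of_nonpos ha ha' (by linarith) (by linarith) (by linarith)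

theorem integral_lt_integral_of_lt_comp_sub_left {f : ℝ → ℝ} (hf : Continuous f) {a b d : ℝ}
    (hba : b < a) (hda : d - b < a) (h : ∀ t ∈ Ioo b a, d - t < t → f t < f (d - t)) :
    ∫ t in b..a, f t < ∫ t in (d - a)..(d - b), f t := by
  set c := max b (d - b) with hc
  have hfi : ∀ x y, IntervalIntegrable f MeasureTheory.volume x y := hf.intervalIntegrable
  have hfd : Continuous fun t ↦ f (d - t) := hf.comp (continuous_sub_left d)
  have hreflect : ∫ t in b..c, f t = ∫ t in (d - c)..(d - b), f t := by
    rcases le_total b (d - b) with hle | hle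
    · rw [hc, max_eq_right hle, sub_sub_cancel]
    · rw [hc, max_eq_left hle, intervalIntegral.integral_same, intervalIntegral.integral_same]
  have htail : ∫ t in c..a, f t < ∫ t in (d - a)..(d - c), f t := by
    rw [← intervalIntegral.integral_comp_sub_left, ← sub_pos,
      ← intervalIntegral.integral_sub (hfd.intervalIntegrable c a) (hfi c a)]
    refine intervalIntegral.intervalIntegral_pos_of_pos_on
      ((hfd.sub hf).intervalIntegrable c a) (fun t ht ↦ ?_) (max_lt hba hda)
    have hbt : b < t := (le_max_left _ _).trans_lt ht.1
    have hdt : d - b < t := (le_max_right _ _).trans_lt ht.1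
    exact sub_pos.2 (h t ⟨hbt, ht.2⟩ (by linarith))
  rw [← intervalIntegral.integral_add_adjacent_intervals (hfi b c) (hfi c a),
    ← intervalIntegral.integral_add_adjacent_intervals (hfi (d - a) (d - c)) (hfi (d - c) (d - b)),
    hreflect]
  linarith

/-- For `a ∈ (0, 3/10]`, `b ∈ [−a, a)` and `s₀ < 0`:
`∫_{s₀−a}^{s₀−b} g_a(s) ds > ∫_b^a g_a(s) ds`. -/
theorem gfun_shifted_integral_gt (a b s₀ : ℝ) (ha : 0 < a) (ha' : a ≤ 3 / 10)
    (hb : -a ≤ b) (hb' : b < a) (hs₀ : s₀ < 0) :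
    (∫ s in b..a, gfun a s) < ∫ s in (s₀ - a)..(s₀ - b), gfun a s :=
  integral_lt_integral_of_lt_comp_sub_left (continuous_gfun a) hb' (by linarith)
    fun t ht hlt ↦ gfun_lt_gfun ha ha' (by linarith [ht.1]) ht.2 hlt (by linarith)
end
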